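/- arXiv:2211.05280 — 6 statements merged into one kernel-verified Lean document; each statement's English description precedes it below -/
import Mathlib

section
/- For 3×3 matrices A, B over a commutative ring, let A × B := adj(A + B) − adj(A) − adj(B); then A × B is a bilinear map in A and B, the adjugate satisfies adj(A + B) = adj(A) + (A × B) + adj(B), and A × A = 2·adj(A). -/
open Matrix

/-- The Freudenthal cross product of 3×3 matrices: `A × B = adj(A+B) − adj A − adj B`. -/
def freudenthalCross {R : Type*} [CommRing R] (A B : Matrix (Fin 3) (Fin 3) R) :
    Matrix (Fin 3) (Fin 3) R :=
  (A + B).adjugate - A.adjugate - B.adjugate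

set_option maxHeartbeats 2000000 in
/-- For 3×3 matrices over a commutative ring, `adj(A+B) = adj A + A × B + adj B`,
and the cross product `A × B` is bilinear in `A` and `B`, with `A × A = 2 • adj A`. -/
theorem freudenthalCross_bilinear (R : Type*) [CommRing R] :
    (∀ A B : Matrix (Fin 3) (Fin 3) R,
      (A + B).adjugate = A.adjugate + freudenthalCross A B + B.adjugate) ∧
    (∀ A B C : Matrix (Fin 3) (Fin 3) R,
      freudenthalCross (A + B) C = freudenthalCross A C + freudenthalCross B C) ∧
    (∀ (r : R) (A B : Matrix (Fin 3) (Fin 3) R),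
      freudenthalCross (r • A) B = r • freudenthalCross A B) ∧
    (∀ A B C : Matrix (Fin 3) (Fin 3) R,
      freudenthalCross A (B + C) = freudenthalCross A B + freudenthalCross A C) ∧
    (∀ (r : R) (A B : Matrix (Fin 3) (Fin 3) R),
      freudenthalCross A (r • B) = r • freudenthalCross A B) ∧
    (∀ A : Matrix (Fin 3) (Fin 3) R, freudenthalCross A A = 2 • A.adjugate) := by
  refine ⟨?_, ?_, ?_, ?_, ?_, ?_⟩
  · intro A B
    simp [freudenthalCross]
    abel
  · intro A B C
    show ((A+B)+C).adjugate - (A+B).adjugate - C.adjugate =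
      ((A+C).adjugate - A.adjugate - C.adjugate) + ((B+C).adjugate - B.adjugate - C.adjugate)
    ext i j
    fin_cases i <;> fin_cases j <;>
      simp [adjugate_fin_three, Matrix.add_apply, Matrix.sub_apply] <;> ring
  · intro r A B
    show (r • A + B).adjugate - (r • A).adjugate - B.adjugate =
      r • ((A+B).adjugate - A.adjugate - B.adjugate)
    ext i j
    fin_cases i <;> fin_cases j <;>
      simp [adjugate_fin_three, Matrix.add_apply, Matrix.sub_apply, Matrix.smul_apply,
        smul_eq_mul] <;> ring
  · intro A B C
    show (A+(B+C)).adjugate - A.adjugate - (B+C).adjugate =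
      ((A+B).adjugate - A.adjugate - B.adjugate) + ((A+C).adjugate - A.adjugate - C.adjugate)
    ext i j
    fin_cases i <;> fin_cases j <;>
      simp [adjugate_fin_three, Matrix.add_apply, Matrix.sub_apply] <;> ring
  · intro r A B
    show (A + r • B).adjugate - A.adjugate - (r • B).adjugate =
      r • ((A+B).adjugate - A.adjugate - B.adjugate)
    ext i j
    fin_cases i <;> fin_cases j <;>
      simp [adjugate_fin_three, Matrix.add_apply, Matrix.sub_apply, Matrix.smul_apply,
        smul_eq_mul] <;> ring
  · intro A
    show (A+A).adjugate - A.adjugate - A.adjugate = 2 • A.adjugate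
    ext i j
    fin_cases i <;> fin_cases j <;>
      simp [adjugate_fin_three, Matrix.add_apply, Matrix.sub_apply, Matrix.smul_apply] <;> ring
end

section
/- Let u, v₁, v₂ be 3×3 symmetric matrices over a commutative ring with adj(u) = 0. Then (u × v₁) × (u × v₂) = (u, v₁, v₂)·u, where (·,·,·) is the full polarization of the determinant, i.e., (u, v₁, v₂) = det(u+v₁+v₂) − det(u+v₁) − det(u+v₂) − det(v₁+v₂) + det(u) + det(v₁) + det(v₂). -/
open Matrix

set_option maxHeartbeats 1000000

/-- The full polarization of the determinant of 3×3 matrices, normalized so that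
`(X,X,X) = 6 det X`. -/
def detTrilinear {R : Type*} [CommRing R] (X Y Z : Matrix (Fin 3) (Fin 3) R) : R :=
  (X + Y + Z).det - (X + Y).det - (X + Z).det - (Y + Z).det + X.det + Y.det + Z.det

/-- If `u` has `adj u = 0` (rank at most one), then
`(u × v₁) × (u × v₂) = (u, v₁, v₂) • u` for symmetric `u, v₁, v₂`. -/
theorem cross_rankOne_identity {R : Type*} [CommRing R]
    (u v₁ v₂ : Matrix (Fin 3) (Fin 3) R)
    (hu : u.IsSymm) (hv₁ : v₁.IsSymm) (hv₂ : v₂.IsSymm)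
    (hadj : u.adjugate = 0) :
    freudenthalCross (freudenthalCross u v₁) (freudenthalCross u v₂) =
      detTrilinear u v₁ v₂ • u := by
  have h0 : u 1 1 * u 2 2 - u 1 2 * u 2 1 = 0 := by
    simpa [Matrix.adjugate_fin_three] using congrFun (congrFun hadj 0) 0 
  have h1 : -(u 0 1 * u 2 2) + u 0 2 * u 2 1 = 0 := by
    simpa [Matrix.adjugate_fin_three] using congrFun (congrFun hadj 0) 1 
  have h2 : u 0 1 * u 1 2 - u 0 2 * u 1 1 = 0 := by
    simpa [Matrix.adjugate_fin_three] using congrFun (congrFun hadj 0) 2 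
  have h3 : -(u 1 0 * u 2 2) + u 1 2 * u 2 0 = 0 := by
    simpa [Matrix.adjugate_fin_three] using congrFun (congrFun hadj 1) 0 
  have h4 : u 0 0 * u 2 2 - u 0 2 * u 2 0 = 0 := by
    simpa [Matrix.adjugate_fin_three] using congrFun (congrFun hadj 1) 1 
  have h5 : -(u 0 0 * u 1 2) + u 0 2 * u 1 0 = 0 := by
    simpa [Matrix.adjugate_fin_three] using congrFun (congrFun hadj 1) 2 
  have h6 : u 1 0 * u 2 1 - u 1 1 * u 2 0 = 0 := by
    simpa [Matrix.adjugate_fin_three] using congrFun (congrFun hadj 2) 0 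
  have h7 : -(u 0 0 * u 2 1) + u 0 1 * u 2 0 = 0 := by
    simpa [Matrix.adjugate_fin_three] using congrFun (congrFun hadj 2) 1 
  have h8 : u 0 0 * u 1 1 - u 0 1 * u 1 0 = 0 := by
    simpa [Matrix.adjugate_fin_three] using congrFun (congrFun hadj 2) 2 
  ext i j
  fin_cases i <;> fin_cases j <;>
    simp only [freudenthalCross, detTrilinear, Matrix.adjugate_fin_three, Matrix.det_fin_three,
      Matrix.sub_apply, Matrix.add_apply, Matrix.smul_apply, smul_eq_mul, Fin.zero_eta,
      Fin.mk_one, Fin.reduceFinMk, Matrix.cons_val', Matrix.cons_val_zero, Matrix.cons_val_one,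
      Matrix.head_cons, Matrix.empty_val', Matrix.cons_val_fin_one, Matrix.head_fin_const,
      Matrix.of_apply, Matrix.cons_val_succ, Matrix.cons_val_two, Matrix.tail_cons]
  · linear_combination (2) * v₁ 0 0 * v₂ 0 0 * h0 + v₁ 0 0 * v₂ 0 1 * h3 + v₁ 0 0 * v₂ 0 2 * h6 + v₁ 0 0 * v₂ 1 0 * h1 + v₁ 0 0 * v₂ 2 0 * h2 + v₁ 0 1 * v₂ 0 0 * h3 + v₁ 0 1 * v₂ 1 0 * h4 + v₁ 0 1 * v₂ 2 0 * h5 + v₁ 0 2 * v₂ 0 0 * h6 + v₁ 0 2 * v₂ 1 0 * h7 + v₁ 0 2 * v₂ 2 0 * h8 + v₁ 1 0 * v₂ 0 0 * h1 + v₁ 1 0 * v₂ 0 1 * h4 + v₁ 1 0 * v₂ 0 2 * h7 + v₁ 2 0 * v₂ 0 0 * h2 + v₁ 2 0 * v₂ 0 1 * h5 + v₁ 2 0 * v₂ 0 2 * h8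
  · linear_combination v₁ 0 0 * v₂ 0 1 * h0 + v₁ 0 0 * v₂ 1 1 * h1 + v₁ 0 0 * v₂ 2 1 * h2 + v₁ 0 1 * v₂ 0 0 * h0 + (2) * v₁ 0 1 * v₂ 0 1 * h3 + v₁ 0 1 * v₂ 0 2 * h6 + v₁ 0 1 * v₂ 1 1 * h4 + v₁ 0 1 * v₂ 2 1 * h5 + v₁ 0 2 * v₂ 0 1 * h6 + v₁ 0 2 * v₂ 1 1 * h7 + v₁ 0 2 * v₂ 2 1 * h8 + v₁ 1 1 * v₂ 0 0 * h1 + v₁ 1 1 * v₂ 0 1 * h4 + v₁ 1 1 * v₂ 0 2 * h7 + v₁ 2 1 * v₂ 0 0 * h2 + v₁ 2 1 * v₂ 0 1 * h5 + v₁ 2 1 * v₂ 0 2 * h8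
  · linear_combination v₁ 0 0 * v₂ 0 2 * h0 + v₁ 0 0 * v₂ 1 2 * h1 + v₁ 0 0 * v₂ 2 2 * h2 + v₁ 0 1 * v₂ 0 2 * h3 + v₁ 0 1 * v₂ 1 2 * h4 + v₁ 0 1 * v₂ 2 2 * h5 + v₁ 0 2 * v₂ 0 0 * h0 + v₁ 0 2 * v₂ 0 1 * h3 + (2) * v₁ 0 2 * v₂ 0 2 * h6 + v₁ 0 2 * v₂ 1 2 * h7 + v₁ 0 2 * v₂ 2 2 * h8 + v₁ 1 2 * v₂ 0 0 * h1 + v₁ 1 2 * v₂ 0 1 * h4 + v₁ 1 2 * v₂ 0 2 * h7 + v₁ 2 2 * v₂ 0 0 * h2 + v₁ 2 2 * v₂ 0 1 * h5 + v₁ 2 2 * v₂ 0 2 * h8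
  · linear_combination v₁ 0 0 * v₂ 1 0 * h0 + v₁ 0 0 * v₂ 1 1 * h3 + v₁ 0 0 * v₂ 1 2 * h6 + v₁ 1 0 * v₂ 0 0 * h0 + (2) * v₁ 1 0 * v₂ 1 0 * h1 + v₁ 1 0 * v₂ 1 1 * h4 + v₁ 1 0 * v₂ 1 2 * h7 + v₁ 1 0 * v₂ 2 0 * h2 + v₁ 1 1 * v₂ 0 0 * h3 + v₁ 1 1 * v₂ 1 0 * h4 + v₁ 1 1 * v₂ 2 0 * h5 + v₁ 1 2 * v₂ 0 0 * h6 + v₁ 1 2 * v₂ 1 0 * h7 + v₁ 1 2 * v₂ 2 0 * h8 + v₁ 2 0 * v₂ 1 0 * h2 + v₁ 2 0 * v₂ 1 1 * h5 + v₁ 2 0 * v₂ 1 2 * h8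
  · linear_combination v₁ 0 1 * v₂ 1 0 * h0 + v₁ 0 1 * v₂ 1 1 * h3 + v₁ 0 1 * v₂ 1 2 * h6 + v₁ 1 0 * v₂ 0 1 * h0 + v₁ 1 0 * v₂ 1 1 * h1 + v₁ 1 0 * v₂ 2 1 * h2 + v₁ 1 1 * v₂ 0 1 * h3 + v₁ 1 1 * v₂ 1 0 * h1 + (2) * v₁ 1 1 * v₂ 1 1 * h4 + v₁ 1 1 * v₂ 1 2 * h7 + v₁ 1 1 * v₂ 2 1 * h5 + v₁ 1 2 * v₂ 0 1 * h6 + v₁ 1 2 * v₂ 1 1 * h7 + v₁ 1 2 * v₂ 2 1 * h8 + v₁ 2 1 * v₂ 1 0 * h2 + v₁ 2 1 * v₂ 1 1 * h5 + v₁ 2 1 * v₂ 1 2 * h8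
  · linear_combination v₁ 0 2 * v₂ 1 0 * h0 + v₁ 0 2 * v₂ 1 1 * h3 + v₁ 0 2 * v₂ 1 2 * h6 + v₁ 1 0 * v₂ 0 2 * h0 + v₁ 1 0 * v₂ 1 2 * h1 + v₁ 1 0 * v₂ 2 2 * h2 + v₁ 1 1 * v₂ 0 2 * h3 + v₁ 1 1 * v₂ 1 2 * h4 + v₁ 1 1 * v₂ 2 2 * h5 + v₁ 1 2 * v₂ 0 2 * h6 + v₁ 1 2 * v₂ 1 0 * h1 + v₁ 1 2 * v₂ 1 1 * h4 + (2) * v₁ 1 2 * v₂ 1 2 * h7 + v₁ 1 2 * v₂ 2 2 * h8 + v₁ 2 2 * v₂ 1 0 * h2 + v₁ 2 2 * v₂ 1 1 * h5 + v₁ 2 2 * v₂ 1 2 * h8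
  · linear_combination v₁ 0 0 * v₂ 2 0 * h0 + v₁ 0 0 * v₂ 2 1 * h3 + v₁ 0 0 * v₂ 2 2 * h6 + v₁ 1 0 * v₂ 2 0 * h1 + v₁ 1 0 * v₂ 2 1 * h4 + v₁ 1 0 * v₂ 2 2 * h7 + v₁ 2 0 * v₂ 0 0 * h0 + v₁ 2 0 * v₂ 1 0 * h1 + (2) * v₁ 2 0 * v₂ 2 0 * h2 + v₁ 2 0 * v₂ 2 1 * h5 + v₁ 2 0 * v₂ 2 2 * h8 + v₁ 2 1 * v₂ 0 0 * h3 + v₁ 2 1 * v₂ 1 0 * h4 + v₁ 2 1 * v₂ 2 0 * h5 + v₁ 2 2 * v₂ 0 0 * h6 + v₁ 2 2 * v₂ 1 0 * h7 + v₁ 2 2 * v₂ 2 0 * h8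
  · linear_combination v₁ 0 1 * v₂ 2 0 * h0 + v₁ 0 1 * v₂ 2 1 * h3 + v₁ 0 1 * v₂ 2 2 * h6 + v₁ 1 1 * v₂ 2 0 * h1 + v₁ 1 1 * v₂ 2 1 * h4 + v₁ 1 1 * v₂ 2 2 * h7 + v₁ 2 0 * v₂ 0 1 * h0 + v₁ 2 0 * v₂ 1 1 * h1 + v₁ 2 0 * v₂ 2 1 * h2 + v₁ 2 1 * v₂ 0 1 * h3 + v₁ 2 1 * v₂ 1 1 * h4 + v₁ 2 1 * v₂ 2 0 * h2 + (2) * v₁ 2 1 * v₂ 2 1 * h5 + v₁ 2 1 * v₂ 2 2 * h8 + v₁ 2 2 * v₂ 0 1 * h6 + v₁ 2 2 * v₂ 1 1 * h7 + v₁ 2 2 * v₂ 2 1 * h8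
  · linear_combination v₁ 0 2 * v₂ 2 0 * h0 + v₁ 0 2 * v₂ 2 1 * h3 + v₁ 0 2 * v₂ 2 2 * h6 + v₁ 1 2 * v₂ 2 0 * h1 + v₁ 1 2 * v₂ 2 1 * h4 + v₁ 1 2 * v₂ 2 2 * h7 + v₁ 2 0 * v₂ 0 2 * h0 + v₁ 2 0 * v₂ 1 2 * h1 + v₁ 2 0 * v₂ 2 2 * h2 + v₁ 2 1 * v₂ 0 2 * h3 + v₁ 2 1 * v₂ 1 2 * h4 + v₁ 2 1 * v₂ 2 2 * h5 + v₁ 2 2 * v₂ 0 2 * h6 + v₁ 2 2 * v₂ 1 2 * h7 + v₁ 2 2 * v₂ 2 0 * h2 + v₁ 2 2 * v₂ 2 1 * h5 + (2) * v₁ 2 2 * v₂ 2 2 * h8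
end

section
/- Let u, v be 3×3 symmetric matrices over a commutative ring. Then adj(u × v) + adj(u) × adj(v) = (u, adj(v))·u + (v, adj(u))·v, where (A,B) = tr(A·B) denotes the trace pairing and X × Y = adj(X+Y) − adj(X) − adj(Y). In particular, if adj(u) = 0, then adj(u × v) = (u, adj(v))·u. -/
open Matrix

set_option maxHeartbeats 1600000 in
private lemma cross_aux {R : Type*} [CommRing R] (a b c d e f a' b' c' d' e' f' : R) :
    (freudenthalCross !![a,b,c;b,d,e;c,e,f] !![a',b',c';b',d',e';c',e',f']).adjugate +
      freudenthalCross (!![a,b,c;b,d,e;c,e,f] : Matrix (Fin 3) (Fin 3) R).adjugate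
        (!![a',b',c';b',d',e';c',e',f'] : Matrix (Fin 3) (Fin 3) R).adjugate =
      (!![a,b,c;b,d,e;c,e,f] * (!![a',b',c';b',d',e';c',e',f'] : Matrix (Fin 3) (Fin 3) R).adjugate).trace • !![a,b,c;b,d,e;c,e,f] +
      (!![a',b',c';b',d',e';c',e',f'] * (!![a,b,c;b,d,e;c,e,f] : Matrix (Fin 3) (Fin 3) R).adjugate).trace • !![a',b',c';b',d',e';c',e',f'] := by
  ext i j
  fin_cases i <;> fin_cases j <;>
    simp [freudenthalCross, Matrix.adjugate_fin_three, Matrix.trace_fin_three,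
      Matrix.mul_fin_three] <;> ring

/-- For 3×3 symmetric matrices,
`adj(u × v) + adj(u) × adj(v) = (u, adj v)·u + (v, adj u)·v`, where `(A,B) = tr(AB)`.
In particular if `adj u = 0` then `adj(u × v) = (u, adj v)·u`. -/
theorem adjugate_cross_identity {R : Type*} [CommRing R]
    (u v : Matrix (Fin 3) (Fin 3) R) (hu : u.IsSymm) (hv : v.IsSymm) :
    ((freudenthalCross u v).adjugate + freudenthalCross u.adjugate v.adjugate =
      (u * v.adjugate).trace • u + (v * u.adjugate).trace • v) ∧
    (u.adjugate = 0 →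
      (freudenthalCross u v).adjugate = (u * v.adjugate).trace • u) := by
  have main : (freudenthalCross u v).adjugate + freudenthalCross u.adjugate v.adjugate =
      (u * v.adjugate).trace • u + (v * u.adjugate).trace • v := by
    have hu10 := hu.apply 0 1
    have hu20 := hu.apply 0 2
    have hu21 := hu.apply 1 2
    have hv10 := hv.apply 0 1
    have hv20 := hv.apply 0 2
    have hv21 := hv.apply 1 2
    have eu : u = !![u 0 0, u 0 1, u 0 2; u 0 1, u 1 1, u 1 2; u 0 2, u 1 2, u 2 2] := by
      ext i j; fin_cases i <;> fin_cases j <;> simp [hu10, hu20, hu21]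
    have ev : v = !![v 0 0, v 0 1, v 0 2; v 0 1, v 1 1, v 1 2; v 0 2, v 1 2, v 2 2] := by
      ext i j; fin_cases i <;> fin_cases j <;> simp [hv10, hv20, hv21]
    rw [eu, ev]
    exact cross_aux _ _ _ _ _ _ _ _ _ _ _ _
  refine ⟨main, fun h0 => ?_⟩
  have hc : freudenthalCross u.adjugate v.adjugate = 0 := by
    simp [freudenthalCross, h0]
  rw [hc, add_zero] at main
  rw [main, h0]
  simp
end

section
/- For natural numbers m, every fixed 0 < s ≤ ⌊m/2⌋ satisfies: the sum over pairs (j,k) of nonnegative integers with j + k = s, 2k ≤ m, and 2j ≤ m − 2k, of (−1)^j · c(m,k) · c(m−2k, j), equals 0, where c(n,j) = n!/(j!·(n−2j)!·2^j). -/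
/-- `c(n,j) = n!/(j!·(n−2j)!·2^j)` for `2j ≤ n`, and `0` otherwise. -/
noncomputable def cCoeff (n j : ℕ) : ℚ :=
  if 2 * j ≤ n then (n.factorial : ℚ) / (j.factorial * (n - 2 * j).factorial * 2 ^ j)
  else 0

/-- For every `1 ≤ s ≤ ⌊m/2⌋`,
`Σ_{j+k=s} (−1)^j · c(m,k) · c(m−2k,j) = 0`. -/
theorem cCoeff_alternating_sum_vanishes (m s : ℕ) (hs : 1 ≤ s) (hsm : 2 * s ≤ m) :
    ∑ k ∈ Finset.range (s + 1),
      (-1 : ℚ) ^ (s - k) * cCoeff m k * cCoeff (m - 2 * k) (s - k) = 0 := by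
  have key : ∀ k ∈ Finset.range (s + 1),
      (-1 : ℚ) ^ (s - k) * cCoeff m k * cCoeff (m - 2 * k) (s - k)
      = ((m.factorial : ℚ) / ((m - 2 * s).factorial * 2 ^ s * s.factorial))
        * ((-1 : ℚ) ^ (s - k) * (s.choose k : ℚ)) := by
    intro k hk
    rw [Finset.mem_range] at hk
    have hk' : k ≤ s := by omega
    have h1 : 2 * k ≤ m := by omega
    have h2 : 2 * (s - k) ≤ m - 2 * k := by omega
    have h3 : m - 2 * k - 2 * (s - k) = m - 2 * s := by omega
    rw [cCoeff, cCoeff, if_pos h1, if_pos h2, h3, Nat.cast_choose ℚ hk']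
    have e1 : (2 : ℚ) ^ k * 2 ^ (s - k) = 2 ^ s := by
      rw [← pow_add]; congr 1; omega
    have nz : ∀ n : ℕ, ((n.factorial : ℚ)) ≠ 0 := fun n => by
      exact_mod_cast n.factorial_ne_zero
    field_simp
    rw [← e1]
  rw [Finset.sum_congr rfl key, ← Finset.mul_sum]
  have : ∑ k ∈ Finset.range (s + 1), (-1 : ℚ) ^ (s - k) * (s.choose k : ℚ) = 0 := by
    rw [← Finset.sum_range_reflect]
    have : ∀ k ∈ Finset.range (s + 1),
        (-1 : ℚ) ^ (s - (s + 1 - 1 - k)) * (s.choose (s + 1 - 1 - k) : ℚ)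
        = (-1 : ℚ) ^ k * (s.choose k : ℚ) := by
      intro k hk
      rw [Finset.mem_range] at hk
      have h1 : s - (s + 1 - 1 - k) = k := by omega
      have h2 : s + 1 - 1 - k = s - k := by omega
      rw [h1, h2, Nat.choose_symm (by omega)]
    rw [Finset.sum_congr rfl this]
    have := Int.alternating_sum_range_choose (n := s)
    rw [if_neg (by omega)] at this
    exact_mod_cast this
  rw [this, mul_zero]
end

section
/- Let K_ν denote the modified Bessel function of the second kind. For integers n ≥ 0 and real b ≥ n, the n-th derivative of u ↦ u^b·K_b(u) on (0,∞) satisfies: d^n/du^n (u^b K_b(u)) = Σ_{j=0}^{⌊n/2⌋} (−1)^{n−j} c(n,j) u^{b−j} K_{b−n+j}(u), where c(n,j) = n!/(j!(n−2j)!2^j). -/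
open Real MeasureTheory

/-- The modified Bessel function of the second kind,
`K_ν(x) = ∫_0^∞ e^{−x cosh t} cosh(νt) dt`. -/
noncomputable def besselK (ν x : ℝ) : ℝ :=
  ∫ t in Set.Ioi (0 : ℝ), Real.exp (-x * Real.cosh t) * Real.cosh (ν * t)

/-- `c(n,j) = n!/(j!·(n−2j)!·2^j)` for `2j ≤ n`, and `0` otherwise. -/
noncomputable def cCoeffR (n j : ℕ) : ℝ :=
  if 2 * j ≤ n then (n.factorial : ℝ) / (j.factorial * (n - 2 * j).factorial * 2 ^ j)
  else 0

/-!
Differentiating under the integral sign gives `K_ν' = -(K_{ν+1} + K_{ν-1}) / 2`, and integrating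
`d/dt (e^{-u cosh t} sinh νt)` over `(0, ∞)` gives `u (K_{ν+1} - K_{ν-1}) = 2ν K_ν`; together,
`(u^a K_ν)' = (a - ν) u^{a-1} K_ν - u^a K_{ν-1}`. Differentiating the sum term by term therefore
reproduces the sum for `n + 1`, because `c(n, j) = C(n, 2j) (2j - 1)!!` counts the matchings with
`j` edges on `n` points and so satisfies `c(n+1, j+1) = c(n, j+1) + (n - 2j) c(n, j)`.
-/

open Set Filter Finset
open scoped Nat

theorem iteratedDerivWithin_eqOn_of_hasDerivWithinAt {𝕜 F : Type*} [NontriviallyNormedField 𝕜]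
    [NormedAddCommGroup F] [NormedSpace 𝕜 F] {s : Set 𝕜} (hs : UniqueDiffOn 𝕜 s)
    {f : ℕ → 𝕜 → F} (hf : ∀ n, ∀ x ∈ s, HasDerivWithinAt (f n) (f (n + 1) x) s x) (n : ℕ) :
    EqOn (iteratedDerivWithin n (f 0) s) (f n) s := by
  induction n with
  | zero => exact fun x _ ↦ by rw [iteratedDerivWithin_zero]
  | succ n ih =>
    intro x hx
    rw [iteratedDerivWithin_succ, derivWithin_congr ih (ih hx),
      (hf n x hx).derivWithin (hs x hx)]

lemma cosh_mul_cosh_mul (ν t : ℝ) :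
    cosh t * cosh (ν * t) = (cosh ((ν + 1) * t) + cosh ((ν - 1) * t)) / 2 := by
  rw [add_mul, sub_mul, one_mul, cosh_add, cosh_sub]; ring

lemma sinh_mul_sinh_mul (ν t : ℝ) :
    sinh t * sinh (ν * t) = (cosh ((ν + 1) * t) - cosh ((ν - 1) * t)) / 2 := by
  rw [add_mul, sub_mul, one_mul, cosh_add, cosh_sub]; ring

lemma factorial_two_mul_eq_doubleFactorial_mul (j : ℕ) :
    (2 * j)! = (2 * j - 1)‼ * 2 ^ j * j ! := by
  cases j with
  | zero => rfl
  | succ k =>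
    rw [show 2 * (k + 1) - 1 = 2 * k + 1 by omega, show 2 * (k + 1) = 2 * k + 1 + 1 by ring,
      Nat.factorial_eq_mul_doubleFactorial, show 2 * k + 1 + 1 = 2 * (k + 1) by ring,
      Nat.doubleFactorial_two_mul]
    ring

lemma doubleFactorial_two_mul_add_one (j : ℕ) :
    (2 * j + 1)‼ = (2 * j + 1) * (2 * j - 1)‼ := by
  cases j with
  | zero => rfl
  | succ k =>
    rw [show 2 * (k + 1) + 1 = 2 * k + 1 + 2 by ring, Nat.doubleFactorial_add_two]
    rfl

lemma cCoeffR_eq_choose_mul_doubleFactorial (n j : ℕ) :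
    cCoeffR n j = (n.choose (2 * j) * (2 * j - 1)‼ : ℕ) := by
  unfold cCoeffR
  split_ifs with h
  · rw [div_eq_iff (by positivity), ← Nat.choose_mul_factorial_mul_factorial h,
      factorial_two_mul_eq_doubleFactorial_mul]
    push_cast
    ring
  · rw [Nat.choose_eq_zero_of_lt (by omega), zero_mul, Nat.cast_zero]

lemma cCoeffR_zero_right (n : ℕ) : cCoeffR n 0 = 1 := by
  simp [cCoeffR_eq_choose_mul_doubleFactorial]

lemma cCoeffR_eq_zero_of_lt {n j : ℕ} (h : n < 2 * j) : cCoeffR n j = 0 := by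
  simp [cCoeffR_eq_choose_mul_doubleFactorial, Nat.choose_eq_zero_of_lt h]

lemma cCoeffR_succ_succ (n j : ℕ) :
    cCoeffR (n + 1) (j + 1) = cCoeffR n (j + 1) + ((n : ℝ) - 2 * j) * cCoeffR n j := by
  have hsub :
      ((n - 2 * j : ℕ) : ℝ) * n.choose (2 * j) = ((n : ℝ) - 2 * j) * n.choose (2 * j) := by
    rcases le_or_gt (2 * j) n with h | h
    · push_cast [h]; ring
    · simp [Nat.choose_eq_zero_of_lt h]
  have hchoose :
      (n.choose (2 * j + 1) : ℝ) * (2 * j + 1) = ((n : ℝ) - 2 * j) * n.choose (2 * j) := by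
    rw [← hsub, mul_comm _ (n.choose (2 * j) : ℝ)]
    exact_mod_cast Nat.choose_succ_right_eq n (2 * j)
  simp only [cCoeffR_eq_choose_mul_doubleFactorial, show 2 * (j + 1) = 2 * j + 1 + 1 by ring,
    Nat.choose_succ_succ', Nat.add_sub_cancel, doubleFactorial_two_mul_add_one]
  push_cast
  linear_combination ((2 * j - 1)‼ : ℝ) * hchoose

section BesselK

variable {u : ℝ}

lemma exp_neg_mul_cosh_le (hu : 0 < u) (n : ℕ) (t : ℝ) :
    exp (-u * cosh t) ≤ n ! * (2 / u) ^ n * exp (-n * t) := by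
  have hy : 0 < u / 2 * exp t := by positivity
  have hcosh : u / 2 * exp t ≤ u * cosh t := by
    rw [cosh_eq]; nlinarith [exp_pos (-t)]
  calc exp (-u * cosh t) ≤ exp (-(u / 2 * exp t)) := exp_le_exp.2 (by linarith)
    _ = 1 / exp (u / 2 * exp t) := by rw [exp_neg, one_div]
    _ ≤ 1 / ((u / 2 * exp t) ^ n / n !) :=
      one_div_le_one_div_of_le (by positivity) (pow_div_factorial_le_exp _ hy.le n)
    _ = n ! * (2 / u) ^ n * exp (-n * t) := by
      rw [neg_mul, exp_neg, exp_nat_mul]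
      field_simp
      rw [← mul_pow]
      field_simp

lemma integrableOn_exp_neg_mul_cosh_mul_cosh (hu : 0 < u) (ν : ℝ) :
    IntegrableOn (fun t ↦ exp (-u * cosh t) * cosh (ν * t)) (Ioi 0) := by
  obtain ⟨n, hn⟩ := exists_nat_gt |ν|
  refine Integrable.mono' ((integrableOn_exp_mul_Ioi (a := |ν| - n) (by linarith) 0).const_mul
    (n ! * (2 / u) ^ n)) (by fun_prop) ((ae_restrict_iff' measurableSet_Ioi).2 (ae_of_all _ ?_))
  intro t ht
  have hν : cosh (ν * t) ≤ exp (|ν| * t) := by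
    have habs : |ν * t| = |ν| * t := by rw [abs_mul, abs_of_pos (show (0 : ℝ) < t from ht)]
    rw [cosh_eq, ← habs]
    linarith [exp_le_exp.2 (le_abs_self (ν * t)), exp_le_exp.2 (neg_le_abs (ν * t))]
  rw [norm_mul, norm_of_nonneg (exp_pos _).le, norm_of_nonneg (cosh_pos _).le]
  calc exp (-u * cosh t) * cosh (ν * t) ≤ (n ! * (2 / u) ^ n * exp (-n * t)) * exp (|ν| * t) :=
        mul_le_mul (exp_neg_mul_cosh_le hu n t) hν (cosh_pos _).le (by positivity)
    _ = n ! * (2 / u) ^ n * exp ((|ν| - n) * t) := by rw [mul_assoc, ← exp_add]; ring_nf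

lemma integrableOn_exp_neg_mul_cosh_mul_cosh_mul_cosh (hu : 0 < u) (ν : ℝ) :
    IntegrableOn (fun t ↦ exp (-u * cosh t) * (cosh t * cosh (ν * t))) (Ioi 0) := by
  simp_rw [cosh_mul_cosh_mul, mul_div, mul_add]
  exact ((integrableOn_exp_neg_mul_cosh_mul_cosh hu _).add
    (integrableOn_exp_neg_mul_cosh_mul_cosh hu _)).div_const 2

lemma integrableOn_exp_neg_mul_cosh_mul_sinh_mul_sinh (hu : 0 < u) (ν : ℝ) :
    IntegrableOn (fun t ↦ exp (-u * cosh t) * (sinh t * sinh (ν * t))) (Ioi 0) := by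
  simp_rw [sinh_mul_sinh_mul, mul_div, mul_sub]
  exact ((integrableOn_exp_neg_mul_cosh_mul_cosh hu _).sub
    (integrableOn_exp_neg_mul_cosh_mul_cosh hu _)).div_const 2

lemma integral_exp_neg_mul_cosh_mul_cosh_mul_cosh (hu : 0 < u) (ν : ℝ) :
    ∫ t in Ioi 0, exp (-u * cosh t) * (cosh t * cosh (ν * t)) =
      (besselK (ν + 1) u + besselK (ν - 1) u) / 2 := by
  simp_rw [cosh_mul_cosh_mul, mul_div, mul_add]
  rw [integral_div, integral_add (integrableOn_exp_neg_mul_cosh_mul_cosh hu _)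
    (integrableOn_exp_neg_mul_cosh_mul_cosh hu _)]
  rfl

lemma integral_exp_neg_mul_cosh_mul_sinh_mul_sinh (hu : 0 < u) (ν : ℝ) :
    ∫ t in Ioi 0, exp (-u * cosh t) * (sinh t * sinh (ν * t)) =
      (besselK (ν + 1) u - besselK (ν - 1) u) / 2 := by
  simp_rw [sinh_mul_sinh_mul, mul_div, mul_sub]
  rw [integral_div, integral_sub (integrableOn_exp_neg_mul_cosh_mul_cosh hu _)
    (integrableOn_exp_neg_mul_cosh_mul_cosh hu _)]
  rfl

lemma hasDerivAt_besselK (hu : 0 < u) (ν : ℝ) :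
    HasDerivAt (besselK ν) (-(besselK (ν + 1) u + besselK (ν - 1) u) / 2) u := by
  have hF : ∀ x t : ℝ, HasDerivAt (fun x ↦ exp (-x * cosh t) * cosh (ν * t))
      (-cosh t * (exp (-x * cosh t) * cosh (ν * t))) x := fun x t ↦
    ((((hasDerivAt_neg x).mul_const (cosh t)).exp).mul_const (cosh (ν * t))).congr_deriv (by ring)
  have hbound : ∀ t, ∀ x ∈ Metric.ball u (u / 2),
      ‖-cosh t * (exp (-x * cosh t) * cosh (ν * t))‖ ≤
        exp (-(u / 2) * cosh t) * (cosh t * cosh (ν * t)) := fun t x hx ↦ by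
    have hx : u / 2 < x := by
      rw [Metric.mem_ball, Real.dist_eq, abs_lt] at hx; linarith
    have hexp : exp (-x * cosh t) ≤ exp (-(u / 2) * cosh t) :=
      exp_le_exp.2 (by nlinarith [cosh_pos t])
    rw [norm_mul, norm_neg, norm_mul, norm_of_nonneg (cosh_pos _).le,
      norm_of_nonneg (exp_pos _).le, norm_of_nonneg (cosh_pos _).le]
    nlinarith [cosh_pos t, cosh_pos (ν * t), mul_pos (cosh_pos t) (cosh_pos (ν * t))]
  have hmeas : ∀ x : ℝ, AEStronglyMeasurable (fun t ↦ exp (-x * cosh t) * cosh (ν * t))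
      (volume.restrict (Ioi 0)) := fun x ↦ by fun_prop
  have hdiff := hasDerivAt_integral_of_dominated_loc_of_deriv_le
    (Metric.ball_mem_nhds u (half_pos hu)) (Eventually.of_forall hmeas)
    (integrableOn_exp_neg_mul_cosh_mul_cosh hu ν) (by fun_prop) (Eventually.of_forall hbound)
    (integrableOn_exp_neg_mul_cosh_mul_cosh_mul_cosh (half_pos hu) ν)
    (Eventually.of_forall fun t x _ ↦ hF x t)
  refine hdiff.2.congr_deriv ?_
  simp only [neg_mul (cosh _), integral_neg, mul_left_comm (cosh _) (exp _)]
  rw [integral_exp_neg_mul_cosh_mul_cosh_mul_cosh hu, neg_div]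

lemma besselK_add_one_sub_besselK_sub_one (hu : 0 < u) (ν : ℝ) :
    u * (besselK (ν + 1) u - besselK (ν - 1) u) = 2 * ν * besselK ν u := by
  set F : ℝ → ℝ := fun t ↦ exp (-u * cosh t) * sinh (ν * t)
  set F' : ℝ → ℝ := fun t ↦ ν * (exp (-u * cosh t) * cosh (ν * t)) -
    u * (exp (-u * cosh t) * (sinh t * sinh (ν * t)))
  have hF : ∀ t, HasDerivAt F (F' t) t := fun t ↦
    ((((hasDerivAt_cosh t).const_mul (-u)).exp).mul
      (((hasDerivAt_id t).const_mul ν).sinh)).congr_deriv (by simp only [F', id]; ring)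
  have hF'int : IntegrableOn F' (Ioi 0) :=
    ((integrableOn_exp_neg_mul_cosh_mul_cosh hu ν).const_mul ν).sub
      ((integrableOn_exp_neg_mul_cosh_mul_sinh_mul_sinh hu ν).const_mul u)
  have hFint : IntegrableOn F (Ioi 0) := by
    refine (integrableOn_exp_neg_mul_cosh_mul_cosh hu ν).mono' (by fun_prop)
      (ae_of_all _ fun t ↦ ?_)
    rw [norm_mul, norm_of_nonneg (exp_pos _).le, Real.norm_eq_abs, abs_sinh, ← cosh_abs (ν * t)]
    exact mul_le_mul_of_nonneg_left (sinh_lt_cosh _).le (exp_pos _).le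
  have hFTC := integral_Ioi_of_hasDerivAt_of_tendsto' (fun t _ ↦ hF t) hF'int
    (tendsto_zero_of_hasDerivAt_of_integrableOn_Ioi (fun t _ ↦ hF t) hF'int hFint)
  rw [integral_sub ((integrableOn_exp_neg_mul_cosh_mul_cosh hu ν).const_mul ν)
      ((integrableOn_exp_neg_mul_cosh_mul_sinh_mul_sinh hu ν).const_mul u),
    integral_const_mul, integral_const_mul,
    integral_exp_neg_mul_cosh_mul_sinh_mul_sinh hu] at hFTC
  simp only [F, mul_zero, sinh_zero, sub_zero] at hFTC
  change ν * besselK ν u - _ = _ at hFTC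
  linarith

lemma hasDerivAt_rpow_mul_besselK (hu : 0 < u) (a ν : ℝ) :
    HasDerivAt (fun x ↦ x ^ a * besselK ν x)
      ((a - ν) * u ^ (a - 1) * besselK ν u - u ^ a * besselK (ν - 1) u) u := by
  refine ((hasDerivAt_rpow_const (Or.inl hu.ne')).mul (hasDerivAt_besselK hu ν)).congr_deriv ?_
  have hpow : u ^ a = u ^ (a - 1) * u := by rw [← rpow_add_one hu.ne']; norm_num
  rw [hpow]
  linear_combination -(u ^ (a - 1) / 2) * besselK_add_one_sub_besselK_sub_one hu ν

end BesselK

/-- The sign `(-1) ^ (n + j)` instead of `(-1) ^ (n - j)` avoids truncated subtraction; summing up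
to `n` instead of `n / 2` only adds vanishing terms. -/
noncomputable def besselKSum (n : ℕ) (b u : ℝ) : ℝ :=
  ∑ j ∈ range (n + 1), (-1) ^ (n + j) * cCoeffR n j * (u ^ (b - j) * besselK (b - n + j) u)

lemma hasDerivAt_besselKSum (n : ℕ) (b : ℝ) {u : ℝ} (hu : 0 < u) :
    HasDerivAt (besselKSum n b) (besselKSum (n + 1) b u) u := by
  set P : ℕ → ℝ := fun j ↦ (-1) ^ (n + j) * cCoeffR n j *
    ((n - 2 * j) * u ^ (b - (j + 1 : ℕ)) * besselK (b - (n + 1 : ℕ) + (j + 1 : ℕ)) u)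
  set Q : ℕ → ℝ := fun j ↦ (-1) ^ (n + j) * cCoeffR n j *
    (u ^ (b - j) * besselK (b - (n + 1 : ℕ) + j) u)
  have hterm : ∀ j ∈ range (n + 1), HasDerivAt
      (fun x ↦ (-1) ^ (n + j) * cCoeffR n j * (x ^ (b - j) * besselK (b - n + j) x))
      (P j - Q j) u :=
    fun j _ ↦ ((hasDerivAt_rpow_mul_besselK hu (b - j) (b - n + j)).const_mul _).congr_deriv
      (by simp only [P, Q]; push_cast; ring_nf)
  have hsucc : ∀ j, (-1) ^ (n + 1 + (j + 1)) * cCoeffR (n + 1) (j + 1) *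
      (u ^ (b - (j + 1 : ℕ)) * besselK (b - (n + 1 : ℕ) + (j + 1 : ℕ)) u) = P j - Q (j + 1) := by
    intro j
    simp only [P, Q, cCoeffR_succ_succ]
    push_cast
    ring
  have hzero : (-1) ^ (n + 1 + 0) * cCoeffR (n + 1) 0 * (u ^ (b - (0 : ℕ)) *
      besselK (b - (n + 1 : ℕ) + (0 : ℕ)) u) = -Q 0 := by
    simp only [Q, cCoeffR_zero_right]
    ring
  have htop : Q (n + 1) = 0 := by simp [Q, cCoeffR_eq_zero_of_lt (show n < 2 * (n + 1) by omega)]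
  have hsum : besselKSum (n + 1) b u = ∑ j ∈ range (n + 1), (P j - Q j) := by
    rw [besselKSum, sum_range_succ', sum_congr rfl fun j _ ↦ hsucc j, hzero, sum_sub_distrib,
      sum_sub_distrib]
    linarith [sum_range_succ' Q (n + 1), sum_range_succ Q (n + 1)]
  rw [hsum]
  exact HasDerivAt.fun_sum hterm

lemma besselKSum_eq_sum_range_div_two (n : ℕ) (b u : ℝ) :
    besselKSum n b u = ∑ j ∈ range (n / 2 + 1),
      (-1 : ℝ) ^ (n - j) * cCoeffR n j * u ^ (b - j) * besselK (b - n + j) u := by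
  refine ((sum_subset (range_subset_range.2 (by omega)) fun j hj hj' ↦ ?_).trans
    (sum_congr rfl fun j hj ↦ ?_)).symm
  · rw [cCoeffR_eq_zero_of_lt (by simp only [Finset.mem_range] at hj hj'; omega)]
    ring
  · rw [show n + j = (n - j) + 2 * j by simp only [Finset.mem_range] at hj; omega, pow_add, pow_mul,
      neg_one_sq, one_pow, mul_one]
    ring

theorem iteratedDeriv_rpow_mul_besselK_general (n : ℕ) (b : ℝ)
    (u : ℝ) (hu : 0 < u) :
    iteratedDerivWithin n (fun u : ℝ => u ^ b * besselK b u) (Set.Ioi 0) u =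
      ∑ j ∈ Finset.range (n / 2 + 1),
        (-1 : ℝ) ^ (n - j) * cCoeffR n j * u ^ (b - j) *
          besselK (b - n + j) u := by
  have hbase : (fun u : ℝ => u ^ b * besselK b u) = besselKSum 0 b := by
    funext x
    simp [besselKSum, cCoeffR_zero_right]
  rw [hbase, iteratedDerivWithin_eqOn_of_hasDerivWithinAt (uniqueDiffOn_Ioi 0)
    (fun k x hx ↦ (hasDerivAt_besselKSum k b hx).hasDerivWithinAt) n hu,
    besselKSum_eq_sum_range_div_two]

/-- For `b ≥ n`, the `n`-th derivative of `u ↦ u^b K_b(u)` on `(0,∞)` is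
`Σ_{j=0}^{⌊n/2⌋} (−1)^{n−j} c(n,j) u^{b−j} K_{b−n+j}(u)`. -/
theorem iteratedDeriv_rpow_mul_besselK (n : ℕ) (b : ℝ) (hb : (n : ℝ) ≤ b)
    (u : ℝ) (hu : 0 < u) :
    iteratedDerivWithin n (fun u : ℝ => u ^ b * besselK b u) (Set.Ioi 0) u =
      ∑ j ∈ Finset.range (n / 2 + 1),
        (-1 : ℝ) ^ (n - j) * cCoeffR n j * u ^ (b - j) *
          besselK (b - n + j) u :=
  iteratedDeriv_rpow_mul_besselK_general n b u hu
end

section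
/- For all real x and all real y > 0: ((x−1)² + y²)·(x² + y²) ≥ (1/5)·(x² + y² + 1)·y². -/
/-- For all real `x` and `y > 0`,
`((x−1)² + y²)·(x² + y²) ≥ (1/5)·(x² + y² + 1)·y²`. -/
theorem lower_bound_one_fifth (x y : ℝ) (hy : 0 < y) :
    ((x - 1) ^ 2 + y ^ 2) * (x ^ 2 + y ^ 2) ≥
      (1 / 5) * (x ^ 2 + y ^ 2 + 1) * y ^ 2 := by
  nlinarith [sq_nonneg (x^2+y^2-2*x), sq_nonneg (x^2+y^2+2*x-1), sq_nonneg (x*y), sq_nonneg y, sq_nonneg (x^2+y^2-1), sq_nonneg (2*(x^2+y^2)-x), mul_pos hy hy, sq_nonneg (y*(x-1)), sq_nonneg (x*(x-1)+y^2)]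
end
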